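/- Let f : ℝ → [0,∞) be a probability density that vanishes outside a bounded open interval S = (s_0, s_1) and satisfies f(x) ≥ b > 0 for all x ∈ S. Let K : ℝ → [0,∞) be a bounded symmetric kernel supported in (−1,1) with ∫K(u) du = 1. Set a_K = 2∫_0^1 u K(u) du, c_K = 2∫_0^1 (u − a_K)² K(u) du and c = c_K/8. Then for every h with 0 < h < (s_1 − s_0)/2 and every x ∈ S, ( ∫ f(x − hu) K(u) du ) · ( ∫ f(x − hu) u² K(u) du ) − ( ∫ f(x − hu) u K(u) du )² ≥ 2 b² c. -/

import Mathlib

/-!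
For a weight `w`, let `D(w) = (∫ w)(∫ u² w) - (∫ u w)²`. For every `t`,
`(∫ w) · ∫ (u - t)² w = D(w) + (t ∫ w - ∫ u w)²`, with equality `D(w) = (∫ w) · ∫ (u - t)² w`
at the mean `t` of `w`; hence `w ≥ b φ ≥ 0` forces `D(w) ≥ b² D(φ)`.

Since `2h < s₁ - s₀`, one of the half-windows `[x - h, x)`, `(x, x + h]` lies in `S`; the
reflection `u ↦ -u` preserves `D` and `K`, so we may take it to be `[x - h, x)`. There
`f(x - hu) K(u) ≥ b φ(u)` for the half kernel `φ = K · 1_{(0,1]}`, and by symmetry `∫ φ = 1/2`,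
which makes `D(φ) = (∫₀¹ u²K)/2 - (∫₀¹ uK)² = 2 c`.
-/

open MeasureTheory Filter Set

noncomputable section

def aK (K : ℝ → ℝ) : ℝ := 2 * ∫ u in (0 : ℝ)..1, u * K u

def cK (K : ℝ → ℝ) : ℝ := 2 * ∫ u in (0 : ℝ)..1, (u - aK K) ^ 2 * K u

def cConst (K : ℝ → ℝ) : ℝ := cK K / 8

open Function

def momentDet (w : ℝ → ℝ) : ℝ :=
  (∫ u, w u) * (∫ u, u ^ 2 * w u) - (∫ u, u * w u) ^ 2

def IntegrableMoments (w : ℝ → ℝ) : Prop :=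
  Integrable w ∧ Integrable (fun u => u * w u) ∧ Integrable (fun u => u ^ 2 * w u)

lemma MeasureTheory.Integrable.continuous_mul_of_support_subset {p w : ℝ → ℝ} {s : Set ℝ}
    (hp : Continuous p) (hw : Integrable w) (hs : IsCompact s) (hws : support w ⊆ s) :
    Integrable (fun u => p u * w u) :=
  (integrableOn_iff_integrable_of_support_subset ((support_mul_subset_right p w).trans hws)).1
    (hw.integrableOn.continuousOn_mul hp.continuousOn hs)

lemma integrableMoments_of_support_subset {w : ℝ → ℝ} {s : Set ℝ} (hw : Integrable w)
    (hs : IsCompact s) (hws : support w ⊆ s) : IntegrableMoments w :=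
  ⟨hw, hw.continuous_mul_of_support_subset continuous_id hs hws,
    hw.continuous_mul_of_support_subset (continuous_pow 2) hs hws⟩

lemma sub_sq_mul_eq (w : ℝ → ℝ) (t u : ℝ) :
    (u - t) ^ 2 * w u = u ^ 2 * w u - 2 * t * (u * w u) + t ^ 2 * w u := by
  ring

namespace IntegrableMoments

variable {w : ℝ → ℝ}

lemma integrable_sub_sq_mul (hw : IntegrableMoments w) (t : ℝ) :
    Integrable (fun u => (u - t) ^ 2 * w u) := by
  simp only [sub_sq_mul_eq w t]
  exact (hw.2.2.sub (hw.2.1.const_mul _)).add (hw.1.const_mul _)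

lemma integral_sub_sq_mul (hw : IntegrableMoments w) (t : ℝ) :
    ∫ u, (u - t) ^ 2 * w u
      = (∫ u, u ^ 2 * w u) - 2 * t * (∫ u, u * w u) + t ^ 2 * ∫ u, w u := by
  simp only [sub_sq_mul_eq w t]
  rw [integral_add, integral_sub, integral_const_mul, integral_const_mul]
  exacts [hw.2.2, hw.2.1.const_mul _, hw.2.2.sub (hw.2.1.const_mul _), hw.1.const_mul _]

lemma integral_mul_integral_sub_sq (hw : IntegrableMoments w) (t : ℝ) :
    (∫ u, w u) * ∫ u, (u - t) ^ 2 * w u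
      = momentDet w + (t * (∫ u, w u) - ∫ u, u * w u) ^ 2 := by
  rw [hw.integral_sub_sq_mul, momentDet]
  ring

end IntegrableMoments

lemma sq_mul_momentDet_le {φ w : ℝ → ℝ} {b : ℝ} (hb : 0 < b) (hφ0 : ∀ u, 0 ≤ φ u)
    (hφw : ∀ u, b * φ u ≤ w u) (hφ : IntegrableMoments φ) (hw : IntegrableMoments w)
    (hφmass : 0 < ∫ u, φ u) :
    b ^ 2 * momentDet φ ≤ momentDet w := by
  have hmass : b * ∫ u, φ u ≤ ∫ u, w u := by
    rw [← integral_const_mul]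
    exact integral_mono (hφ.1.const_mul b) hw.1 hφw
  have hwmass : 0 < ∫ u, w u := (mul_pos hb hφmass).trans_le hmass
  set t := (∫ u, u * w u) / ∫ u, w u
  have hspread : b * ∫ u, (u - t) ^ 2 * φ u ≤ ∫ u, (u - t) ^ 2 * w u := by
    rw [← integral_const_mul]
    refine integral_mono ((hφ.integrable_sub_sq_mul t).const_mul b)
      (hw.integrable_sub_sq_mul t) fun u => ?_
    calc b * ((u - t) ^ 2 * φ u) = (u - t) ^ 2 * (b * φ u) := by ring
      _ ≤ (u - t) ^ 2 * w u := mul_le_mul_of_nonneg_left (hφw u) (sq_nonneg _)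
  have hspread0 : 0 ≤ b * ∫ u, (u - t) ^ 2 * φ u :=
    mul_nonneg hb.le (integral_nonneg fun u => mul_nonneg (sq_nonneg _) (hφ0 u))
  have hcentre : t * (∫ u, w u) - ∫ u, u * w u = 0 := by
    rw [div_mul_cancel₀ _ hwmass.ne', sub_self]
  calc b ^ 2 * momentDet φ
      ≤ b ^ 2 * ((∫ u, φ u) * ∫ u, (u - t) ^ 2 * φ u) := by
        rw [hφ.integral_mul_integral_sub_sq t]
        nlinarith [sq_nonneg b, sq_nonneg (t * (∫ u, φ u) - ∫ u, u * φ u)]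
    _ = (b * ∫ u, φ u) * (b * ∫ u, (u - t) ^ 2 * φ u) := by ring
    _ ≤ (∫ u, w u) * ∫ u, (u - t) ^ 2 * w u := mul_le_mul hmass hspread hspread0 hwmass.le
    _ = momentDet w := by rw [hw.integral_mul_integral_sub_sq t, hcentre]; ring

lemma momentDet_comp_neg (w : ℝ → ℝ) : momentDet (fun u => w (-u)) = momentDet w := by
  have h0 : ∫ u, w (-u) = ∫ u, w u := integral_neg_eq_self w volume
  have h1 : ∫ u, u * w (-u) = -∫ u, u * w u := by
    rw [← integral_neg_eq_self (fun u => u * w u), ← integral_neg]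
    simp
  have h2 : ∫ u, u ^ 2 * w (-u) = ∫ u, u ^ 2 * w u := by
    rw [← integral_neg_eq_self (fun u => u ^ 2 * w u)]
    simp
  rw [momentDet, momentDet, h0, h1, h2, neg_sq]

lemma momentDet_mul (F K : ℝ → ℝ) :
    momentDet (fun u => F u * K u)
      = (∫ u, F u * K u) * (∫ u, F u * (u ^ 2 * K u)) - (∫ u, F u * (u * K u)) ^ 2 := by
  simp only [momentDet, mul_left_comm]

lemma integral_indicator_Ioc_zero_one (G : ℝ → ℝ) :
    ∫ u, (Ioc 0 1).indicator G u = ∫ u in (0 : ℝ)..1, G u := by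
  rw [integral_indicator measurableSet_Ioc, intervalIntegral.integral_of_le zero_le_one]

lemma integral_zero_one_of_symmetric {K : ℝ → ℝ} (hK : Integrable K)
    (hKsym : ∀ u, K (-u) = K u) (hKsupp : support K ⊆ Ioo (-1) 1) :
    ∫ u in (0 : ℝ)..1, K u = (∫ u, K u) / 2 := by
  have hfull : ∫ u, K u = ∫ u in (-1 : ℝ)..1, K u := by
    rw [intervalIntegral.integral_of_le (by norm_num),
      setIntegral_eq_integral_of_forall_compl_eq_zero]
    exact fun u hu => notMem_support.1 fun h => hu (Ioo_subset_Ioc_self (hKsupp h))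
  have hleft : ∫ u in (-1 : ℝ)..0, K u = ∫ u in (0 : ℝ)..1, K u := by
    simpa [hKsym] using (intervalIntegral.integral_comp_neg (a := 0) (b := 1) K).symm
  rw [hfull, ← intervalIntegral.integral_add_adjacent_intervals (a := -1) (b := 0) (c := 1)
    hK.intervalIntegrable hK.intervalIntegrable, hleft]
  ring

lemma two_mul_cConst {K : ℝ → ℝ} (hK : IntegrableMoments ((Ioc 0 1).indicator K))
    (hhalf : ∫ u in (0 : ℝ)..1, K u = 1 / 2) :
    2 * cConst K = momentDet ((Ioc 0 1).indicator K) := by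
  have hmom (p : ℝ → ℝ) :
      ∫ u in (0 : ℝ)..1, p u * K u = ∫ u, p u * (Ioc 0 1).indicator K u := by
    simp only [← indicator_mul_right, integral_indicator_Ioc_zero_one]
  have h0 : ∫ u, (Ioc 0 1).indicator K u = 1 / 2 := by
    rw [integral_indicator_Ioc_zero_one, hhalf]
  have ha : aK K = 2 * ∫ u, u * (Ioc 0 1).indicator K u := by rw [aK, hmom]
  rw [cConst, cK, hmom, hK.integral_sub_sq_mul, ha, momentDet, h0]
  ring

lemma two_mul_sq_mul_cConst_le_momentDet {F K : ℝ → ℝ} {b CKb : ℝ} (hb : 0 < b)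
    (hF : Integrable F) (hF0 : ∀ u, 0 ≤ F u) (hFb : ∀ u ∈ Ioc (0 : ℝ) 1, b ≤ F u)
    (hK0 : ∀ u, 0 ≤ K u) (hKb : ∀ u, K u ≤ CKb) (hKsym : ∀ u, K (-u) = K u)
    (hKsupp : support K ⊆ Ioo (-1) 1) (hKint : ∫ u, K u = 1) :
    2 * b ^ 2 * cConst K ≤ momentDet (fun u => F u * K u) := by
  have hK : Integrable K := Integrable.of_integral_ne_zero (by rw [hKint]; exact one_ne_zero)
  set φ := (Ioc (0 : ℝ) 1).indicator K
  have hhalf : ∫ u in (0 : ℝ)..1, K u = 1 / 2 := by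
    rw [integral_zero_one_of_symmetric hK hKsym hKsupp, hKint]
  have hφ : IntegrableMoments φ :=
    integrableMoments_of_support_subset (hK.indicator measurableSet_Ioc) isCompact_Icc
      (support_indicator_subset.trans Ioc_subset_Icc_self)
  have hw : IntegrableMoments (fun u => F u * K u) :=
    integrableMoments_of_support_subset
      (hF.mul_bdd hK.1 (Eventually.of_forall fun u => by
        rw [Real.norm_of_nonneg (hK0 u)]; exact hKb u))
      isCompact_Icc ((support_mul_subset_right F K).trans (hKsupp.trans Ioo_subset_Icc_self))
  have hφw : ∀ u, b * φ u ≤ F u * K u := by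
    intro u
    by_cases hu : u ∈ Ioc (0 : ℝ) 1
    · simp only [φ, indicator_of_mem hu]
      exact mul_le_mul_of_nonneg_right (hFb u hu) (hK0 u)
    · simp only [φ, indicator_of_notMem hu, mul_zero]
      exact mul_nonneg (hF0 u) (hK0 u)
  have hφmass : 0 < ∫ u, φ u := by
    rw [integral_indicator_Ioc_zero_one, hhalf]
    norm_num
  calc 2 * b ^ 2 * cConst K = b ^ 2 * momentDet φ := by rw [← two_mul_cConst hφ hhalf]; ring
    _ ≤ momentDet (fun u => F u * K u) :=
      sq_mul_momentDet_le hb (indicator_nonneg fun u _ => hK0 u) hφw hφ hw hφmass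

theorem stmt4_general (f : ℝ → ℝ) (s0 s1 b : ℝ) (hb : 0 < b)
    (hf0 : ∀ x, 0 ≤ f x) (hfint : (∫ x, f x) = 1)
    (hfb : ∀ x ∈ Set.Ioo s0 s1, b ≤ f x)
    (K : ℝ → ℝ) (hK0 : ∀ u, 0 ≤ K u) (CKb : ℝ) (hKb : ∀ u, K u ≤ CKb)
    (hKsym : ∀ u, K (-u) = K u)
    (hKsupp : ∀ u, u ∉ Set.Ioo (-1 : ℝ) 1 → K u = 0)
    (hKint : (∫ u, K u) = 1) :
    ∀ h : ℝ, 0 < h → h < (s1 - s0) / 2 → ∀ x ∈ Set.Ioo s0 s1,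
      2 * b ^ 2 * cConst K ≤
        (∫ u, f (x - h * u) * K u) * (∫ u, f (x - h * u) * (u ^ 2 * K u))
          - (∫ u, f (x - h * u) * (u * K u)) ^ 2 := by
  intro h hh hhs x hx
  have hf : Integrable f := Integrable.of_integral_ne_zero (by rw [hfint]; exact one_ne_zero)
  have hshift {c : ℝ} (hc : c ≠ 0) : Integrable fun u => f (x + c * u) :=
    (hf.comp_add_left x).comp_mul_left' hc
  have hKsupp' : support K ⊆ Ioo (-1) 1 := support_subset_iff'.2 hKsupp
  rw [← momentDet_mul]
  rcases lt_or_ge s0 (x - h) with hleft | hright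
  · have hF : Integrable fun u => f (x - h * u) := by
      simpa [neg_mul, ← sub_eq_add_neg] using hshift (neg_ne_zero.2 hh.ne')
    refine two_mul_sq_mul_cConst_le_momentDet hb hF (fun u => hf0 _) (fun u hu => hfb _ ⟨?_, ?_⟩)
      hK0 hKb hKsym hKsupp' hKint
    · nlinarith [mul_le_mul_of_nonneg_left hu.2 hh.le]
    · nlinarith [mul_pos hh hu.1, hx.2]
  · rw [← momentDet_comp_neg]
    have hwindow : ∀ u ∈ Ioc (0 : ℝ) 1, b ≤ f (x + h * u) := fun u hu => hfb _ ⟨by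
      nlinarith [mul_pos hh hu.1, hx.1], by nlinarith [mul_le_mul_of_nonneg_left hu.2 hh.le]⟩
    convert two_mul_sq_mul_cConst_le_momentDet hb (hshift hh.ne') (fun u => hf0 _) hwindow
      hK0 hKb hKsym hKsupp' hKint using 2
    ext u
    simp [hKsym]

/-- the population local linear design determinant is bounded
below by `2 b² c` uniformly over `x ∈ S` for all small bandwidths `h`. -/
theorem stmt4 (f : ℝ → ℝ) (s0 s1 b : ℝ) (hs : s0 < s1) (hb : 0 < b)
    (hf0 : ∀ x, 0 ≤ f x) (hfint : (∫ x, f x) = 1)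
    (hsupp : ∀ x, x ∉ Set.Ioo s0 s1 → f x = 0)
    (hfb : ∀ x ∈ Set.Ioo s0 s1, b ≤ f x)
    (K : ℝ → ℝ) (hK0 : ∀ u, 0 ≤ K u) (CKb : ℝ) (hKb : ∀ u, K u ≤ CKb)
    (hKsym : ∀ u, K (-u) = K u)
    (hKsupp : ∀ u, u ∉ Set.Ioo (-1 : ℝ) 1 → K u = 0)
    (hKint : (∫ u, K u) = 1) :
    ∀ h : ℝ, 0 < h → h < (s1 - s0) / 2 → ∀ x ∈ Set.Ioo s0 s1,
      2 * b ^ 2 * cConst K ≤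
        (∫ u, f (x - h * u) * K u) * (∫ u, f (x - h * u) * (u ^ 2 * K u))
          - (∫ u, f (x - h * u) * (u * K u)) ^ 2 :=
  stmt4_general f s0 s1 b hb hf0 hfint hfb K hK0 CKb hKb hKsym hKsupp hKint
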